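/- arXiv:1705.04937 — 2 statements merged into one kernel-verified Lean document; each statement's English description precedes it below -/
import Mathlib

section
/- Let P be a well-quasi-ordered set whose quotient by the equivalence x ≡ y ↔ (x ≤_P y ∧ y ≤_P x) is countable. Let (f_α)_{α < ω₁} be a family of functions ℕ → P such that f_α ≤* f_β whenever α < β. Then there exist α < β < ω₁ with f_β ≤* f_α (i.e., the chain is not strictly increasing). -/
/-- Subsequence-domination order on sequences. -/
def leStar {P : Type*} (le : P → P → Prop) (f g : ℕ → P) : Prop :=
  ∃ k : ℕ → ℕ, StrictMono k ∧ ∀ n, le (f n) (g (k n))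

namespace Stmt4Aux

variable {P : Type*} (le : P → P → Prop)

/-- `Em le s f N`: the finite list `s` embeds (w.r.t. `le`) into `f` at positions `≥ N`. -/
def Em : List P → (ℕ → P) → ℕ → Prop
  | [], _, _ => True
  | r :: t, f, N => ∃ n, N ≤ n ∧ le r (f n) ∧ Em t f (n + 1)

theorem em_mono : ∀ (s : List P) (f : ℕ → P) (N M : ℕ), N ≤ M → Em le s f M → Em le s f N := by
  intro s
  induction s with
  | nil => intro f N M _ _; trivial
  | cons r t ih =>
    rintro f N M hNM ⟨n, hMn, hle, htail⟩
    exact ⟨n, hNM.trans hMn, hle, htail⟩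

theorem em_star (htrans : ∀ x y z, le x y → le y z → le x z) :
    ∀ (s : List P) (g h : ℕ → P) (k : ℕ → ℕ), StrictMono k →
      (∀ n, le (g n) (h (k n))) → ∀ N, Em le s g N → Em le s h (k N) := by
  intro s
  induction s with
  | nil => intro _ _ _ _ _ _ _; trivial
  | cons r t ih =>
    rintro g h k hk hkle N ⟨n, hNn, hle, htail⟩
    exact ⟨k n, hk.monotone hNn, htrans _ _ _ hle (hkle n),
      em_mono le t h (k n + 1) (k (n + 1)) (hk (Nat.lt_succ_self n))
        (ih g h k hk hkle (n + 1) htail)⟩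

theorem em_self (g q : ℕ → P) (hq : ∀ n, le (q n) (g n)) :
    ∀ (m j : ℕ), Em le ((List.range' j m).map q) g j := by
  intro m
  induction m with
  | zero => intro j; trivial
  | succ m ih =>
    intro j
    rw [List.range'_succ]
    exact ⟨j, le_rfl, hq j, ih (j + 1)⟩

theorem em_self₀ (g q : ℕ → P) (hq : ∀ n, le (q n) (g n)) (m : ℕ) :
    Em le ((List.range m).map q) g 0 := by
  rw [List.range_eq_range']
  exact em_self le g q hq m 0

/-- Greedy construction: if every finite "representative prefix" of `g` embeds into `h`,
then `g` subsequence-embeds into `h`. -/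
theorem em_greedy (htrans : ∀ x y z, le x y → le y z → le x z)
    (g h : ℕ → P) (q : ℕ → P) (hq : ∀ n, le (g n) (q n))
    (H : ∀ m, Em le ((List.range m).map q) h 0) :
    ∃ k : ℕ → ℕ, StrictMono k ∧ ∀ n, le (g n) (h (k n)) := by
  classical
  set L : ℕ → List P := fun m => (List.range m).map q with hLdef
  set Inv : ℕ → ℕ → Prop := fun m c => ∀ t, Em le (L m ++ t) h 0 → Em le t h c with hInv
  have base : Inv 0 0 := by
    intro t ht
    simpa [hLdef] using ht
  have hL : ∀ m, L (m + 1) = L m ++ [q m] := by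
    intro m; simp [hLdef, List.range_succ]
  have step : ∀ m c, Inv m c → ∃ n, c ≤ n ∧ le (g m) (h n) ∧ Inv (m + 1) (n + 1) := by
    intro m c hc
    have hex : ∃ n, c ≤ n ∧ le (q m) (h n) := by
      have h1 := H (m + 1)
      rw [show (List.range (m + 1)).map q = L (m + 1) from rfl, hL] at h1
      obtain ⟨n, hcn, hle, -⟩ := hc [q m] h1
      exact ⟨n, hcn, hle⟩
    refine ⟨Nat.find hex, (Nat.find_spec hex).1,
      htrans _ _ _ (hq m) (Nat.find_spec hex).2, ?_⟩
    intro t ht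
    rw [hL, List.append_assoc, List.singleton_append] at ht
    obtain ⟨n, hcn, hle, htail⟩ := hc (q m :: t) ht
    exact em_mono le t h _ _ (Nat.succ_le_succ (Nat.find_min' hex ⟨hcn, hle⟩)) htail
  choose nxt h1 h2 h3 using step
  let C : ∀ m : ℕ, {c : ℕ // Inv m c} := fun m =>
    Nat.rec ⟨0, base⟩ (fun m ih => ⟨nxt m ih.1 ih.2 + 1, h3 m ih.1 ih.2⟩) m
  refine ⟨fun m => nxt m (C m).1 (C m).2, strictMono_nat_of_lt_succ ?_,
    fun m => h2 m (C m).1 (C m).2⟩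
  intro m
  have hc : (C (m + 1)).1 = nxt m (C m).1 (C m).2 + 1 := rfl
  calc nxt m (C m).1 (C m).2 < (C (m + 1)).1 := by rw [hc]; exact Nat.lt_succ_self _
    _ ≤ nxt (m + 1) (C (m + 1)).1 (C (m + 1)).2 := h1 _ _ _

end Stmt4Aux

open Stmt4Aux in
theorem stmt4 {P : Type*} (le : P → P → Prop)
    (hrefl : ∀ x, le x x) (htrans : ∀ x y z, le x y → le y z → le x z)
    (hwqo : ∀ p : ℕ → P, ∃ i j, i < j ∧ le (p i) (p j))
    (reps : Set P) (hreps : reps.Countable)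
    (hquot : ∀ x : P, ∃ r ∈ reps, le x r ∧ le r x)
    (f : Ordinal → (ℕ → P))
    (hchain : ∀ α β : Ordinal, α < β → β < (Cardinal.aleph 1).ord →
      leStar le (f α) (f β)) :
    ∃ α β : Ordinal, α < β ∧ β < (Cardinal.aleph 1).ord ∧
      leStar le (f β) (f α) := by
  classical
  by_contra hcon
  push_neg at hcon
  -- hcon : ∀ α β, α < β → β < ord → ¬ leStar le (f β) (f α)
  choose ρ hρmem hρ1 hρ2 using hquot
  have hlim := Cardinal.isSuccLimit_ord (Cardinal.aleph0_le_aleph 1)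
  have hsucc : ∀ α : Ordinal, α < (Cardinal.aleph 1).ord → α + 1 < (Cardinal.aleph 1).ord := by
    intro α hα
    rw [Ordinal.add_one_eq_succ]
    exact hlim.succ_lt hα
  have hlt1 : ∀ α : Ordinal, α < α + 1 := by
    intro α
    rw [Ordinal.add_one_eq_succ]
    exact Order.lt_succ α
  -- for each α < ω₁, some representative prefix of f (α+1) embeds into f (α+1) but not f α
  have key : ∀ α : Ordinal, α < (Cardinal.aleph 1).ord →
      ∃ m : ℕ, ¬ Em le ((List.range m).map (fun n => ρ (f (α + 1) n))) (f α) 0 := by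
    intro α hα
    by_contra hno
    push_neg at hno
    exact hcon α (α + 1) (hlt1 α) (hsucc α hα)
      (em_greedy le htrans (f (α + 1)) (f α) (fun n => ρ (f (α + 1) n))
        (fun n => hρ1 _) hno)
  choose M hM using key
  -- the witnesses, as lists over the countable set of representatives
  set W : (Set.Iio ((Cardinal.aleph 1).ord)) → List ↥reps := fun a =>
    (List.range (M a.1 a.2)).map (fun n => ⟨ρ (f (a.1 + 1) n), hρmem _⟩) with hW
  have hWval : ∀ a : (Set.Iio ((Cardinal.aleph 1).ord)),
      (W a).map Subtype.val = (List.range (M a.1 a.2)).map (fun n => ρ (f (a.1 + 1) n)) := by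
    intro a
    simp [hW, List.map_map, Function.comp]
  have main : ∀ a b : (Set.Iio ((Cardinal.aleph 1).ord)), a.1 < b.1 → W a ≠ W b := by
    intro a b hab heq
    have hstart : Em le ((List.range (M a.1 a.2)).map (fun n => ρ (f (a.1 + 1) n)))
        (f (a.1 + 1)) 0 :=
      em_self₀ le (f (a.1 + 1)) _ (fun n => hρ2 _) _
    have hle1 : a.1 + 1 ≤ b.1 := by
      rw [Ordinal.add_one_eq_succ]
      exact Order.succ_le_of_lt hab
    have h1 : Em le ((List.range (M a.1 a.2)).map (fun n => ρ (f (a.1 + 1) n))) (f b.1) 0 := by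
      rcases eq_or_lt_of_le hle1 with he | hlt2
      · rw [← he]; exact hstart
      · obtain ⟨k, hk, hkle⟩ := hchain (a.1 + 1) b.1 hlt2 b.2
        exact em_mono le _ _ 0 (k 0) (Nat.zero_le _)
          (em_star le htrans _ (f (a.1 + 1)) (f b.1) k hk hkle 0 hstart)
    have hlists : (List.range (M a.1 a.2)).map (fun n => ρ (f (a.1 + 1) n))
        = (List.range (M b.1 b.2)).map (fun n => ρ (f (b.1 + 1) n)) := by
      rw [← hWval a, ← hWval b, heq]
    rw [hlists] at h1
    exact hM b.1 b.2 h1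
  have hinj : Function.Injective W := by
    intro a b heq
    by_contra hne
    rcases lt_trichotomy a.1 b.1 with h | h | h
    · exact main a b h heq
    · exact hne (Subtype.ext h)
    · exact main b a h heq.symm
  -- cardinality contradiction
  have : Countable ↥reps := hreps.to_subtype
  have hcnt : Countable (Set.Iio ((Cardinal.aleph 1).ord)) := hinj.countable
  have h2 : Cardinal.mk (Set.Iio ((Cardinal.aleph 1).ord)) ≤ Cardinal.aleph0 :=
    Cardinal.mk_le_aleph0
  rw [Ordinal.mk_Iio_ordinal, Cardinal.card_ord] at h2
  have h4 := (Cardinal.lift_lt.mpr Cardinal.aleph0_lt_aleph_one).trans_le h2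
  rw [Cardinal.lift_aleph0] at h4
  exact h4.false
end

section
/- Let P be a well-quasi-order with countably many ≡-classes. If (f_α)_{α < ω₁} is a ≤*-increasing ω₁-chain in ℕ → P (f_α ≤* f_β for α ≤ β), then there is α₀ < ω₁ such that for all α₀ ≤ α ≤ β < ω₁, f_β ≤* f_α (the chain is eventually constant up to equivalence). -/
section Aux

variable {P : Type*} (le : P → P → Prop)

/-- Stabilization of an increasing ω₁-chain of subsets of a countable type. -/
lemma stab_lemma {C : Type u} [Countable C] (S : Ordinal.{v} → Set C)
    (mono : ∀ α β : Ordinal, α ≤ β → β < (Cardinal.aleph 1).ord → S α ⊆ S β) :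
    ∃ α₀ : Ordinal, α₀ < (Cardinal.aleph 1).ord ∧
      ∀ α β : Ordinal, α₀ ≤ α → α ≤ β → β < (Cardinal.aleph 1).ord → S β ⊆ S α := by
  classical
  set w1 : Ordinal.{v} := (Cardinal.aleph 1).ord with hw1def
  have hlim : Order.IsSuccLimit w1 := Cardinal.isSuccLimit_ord (Cardinal.aleph0_le_aleph 1)
  obtain ⟨e, he⟩ : ∃ e : C → ℕ, Function.Injective e := Countable.exists_injective_nat C
  let g : C → Ordinal.{v} := fun c => sInf {α | α < w1 ∧ c ∈ S α}
  have hg : ∀ c, g c < w1 := by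
    intro c
    by_cases h : {α | α < w1 ∧ c ∈ S α}.Nonempty
    · exact (csInf_mem h).1
    · simp only [g, Set.not_nonempty_iff_eq_empty.mp h, Ordinal.sInf_empty]
      exact hlim.pos
  let g' : ℕ → Ordinal.{v} := fun n =>
    if h : ∃ c, e c = n then Order.succ (g h.choose) else 0
  have hg' : ∀ c, Order.succ (g c) = g' (e c) := by
    intro c
    have h : ∃ c', e c' = e c := ⟨c, rfl⟩
    simp only [g', dif_pos h, he h.choose_spec]
  refine ⟨⨆ n, g' n, ?_, ?_⟩
  · refine Cardinal.iSup_lt_ord_lift_of_isRegular Cardinal.isRegular_aleph_one ?_ ?_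
    · simpa using Cardinal.aleph0_lt_aleph_one
    · intro n
      by_cases h : ∃ c, e c = n
      · simpa only [g', dif_pos h] using hlim.succ_lt (hg _)
      · simpa only [g', dif_neg h] using hlim.pos
  · intro α β hα hαβ hβ c hc
    have hne : {α' | α' < w1 ∧ c ∈ S α'}.Nonempty := ⟨β, hβ, hc⟩
    have hmem := csInf_mem hne
    have hsucc : Order.succ (g c) ≤ α := by
      rw [hg' c]; exact le_trans (Ordinal.le_iSup g' (e c)) hα
    exact mono (g c) α (le_trans (Order.le_succ _) hsucc)
      (lt_of_le_of_lt hαβ hβ) hmem.2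

/-- In a wqo, all but finitely many terms of a sequence lie below infinitely
many terms of the same sequence. -/
lemma good_tail (hrefl : ∀ x, le x x) (htrans : ∀ x y z, le x y → le y z → le x z)
    (hwqo : ∀ p : ℕ → P, ∃ i j, i < j ∧ le (p i) (p j)) (p : ℕ → P) :
    ∃ n₀ : ℕ, ∀ n, n₀ ≤ n → ∀ N, ∃ m, N ≤ m ∧ le (p n) (p m) := by
  classical
  haveI : IsTrans P le := ⟨fun a b c => htrans a b c⟩
  haveI : IsRefl P le := ⟨hrefl⟩
  haveI : IsPreorder P le := { refl := hrefl, trans := fun a b c => htrans a b c }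
  set B : Set ℕ := {n | ¬ ∀ N, ∃ m, N ≤ m ∧ le (p n) (p m)} with hBdef
  have hBfin : B.Finite := by
    by_contra hinf
    replace hinf : B.Infinite := hinf
    have hpwo : (Set.univ : Set P).PartiallyWellOrderedOn le :=
      fun q => hwqo (fun n => (q n).1)
    obtain ⟨g, hg⟩ := hpwo.exists_monotone_subseq (f := fun j => p (Nat.nth (· ∈ B) j))
      (fun _ => Set.mem_univ _)
    have hnthmono : StrictMono (fun j => Nat.nth (· ∈ B) (g j)) :=
      fun a b hab => (Nat.nth_strictMono hinf) (g.strictMono hab)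
    have hmem : Nat.nth (· ∈ B) (g 0) ∈ B := Nat.nth_mem_of_infinite hinf (g 0)
    apply hmem
    intro N
    refine ⟨Nat.nth (· ∈ B) (g N), hnthmono.le_apply, hg 0 N (Nat.zero_le N)⟩
  obtain ⟨b, hb⟩ := hBfin.bddAbove
  refine ⟨b + 1, fun n hn => ?_⟩
  by_contra hbad
  exact absurd (hb (hbad : n ∈ B)) (by omega)

/-- Recursive construction of a strictly monotone witness from unbounded domination. -/
lemma build_seq (p q : ℕ → P) (n₀ base : ℕ)
    (H : ∀ j (N : ℕ), ∃ m, N ≤ m ∧ le (p (n₀ + j)) (q m)) :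
    ∃ t : ℕ → ℕ, StrictMono t ∧ base ≤ t 0 ∧ ∀ j, le (p (n₀ + j)) (q (t j)) := by
  classical
  let t : ℕ → ℕ := fun j =>
    Nat.rec ((H 0 base).choose) (fun j prev => (H (j + 1) (prev + 1)).choose) j
  have ht0 : base ≤ t 0 ∧ le (p (n₀ + 0)) (q (t 0)) := (H 0 base).choose_spec
  have htsucc : ∀ j, t j + 1 ≤ t (j + 1) ∧ le (p (n₀ + (j + 1))) (q (t (j + 1))) :=
    fun j => (H (j + 1) (t j + 1)).choose_spec
  refine ⟨t, strictMono_nat_of_lt_succ (fun j => by have := (htsucc j).1; omega),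
    ht0.1, fun j => ?_⟩
  cases j with
  | zero => exact ht0.2
  | succ j => exact (htsucc j).2

end Aux

theorem stmt12 {P : Type*} (le : P → P → Prop)
    (hrefl : ∀ x, le x x) (htrans : ∀ x y z, le x y → le y z → le x z)
    (hwqo : ∀ p : ℕ → P, ∃ i j, i < j ∧ le (p i) (p j))
    (reps : Set P) (hreps : reps.Countable)
    (hquot : ∀ x : P, ∃ r ∈ reps, le x r ∧ le r x)
    (f : Ordinal → (ℕ → P))
    (hchain : ∀ α β : Ordinal, α ≤ β → β < (Cardinal.aleph 1).ord →
      leStar le (f α) (f β)) :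
    ∃ α₀ : Ordinal, α₀ < (Cardinal.aleph 1).ord ∧
      ∀ α β : Ordinal, α₀ ≤ α → α ≤ β → β < (Cardinal.aleph 1).ord →
        leStar le (f β) (f α) := by
  classical
  haveI : Countable ↥reps := hreps.to_subtype
  set w1 : Ordinal := (Cardinal.aleph 1).ord with hw1def
  -- invariant 1 : reps below infinitely many terms
  set S1 : Ordinal → Set ↥reps :=
    fun α => {r | ∀ N, ∃ m, N ≤ m ∧ le r.1 (f α m)} with hS1def
  have hS1mono : ∀ α β : Ordinal, α ≤ β → β < w1 → S1 α ⊆ S1 β := by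
    intro α β hαβ hβ r hr N
    obtain ⟨k, hk, hkle⟩ := hchain α β hαβ hβ
    obtain ⟨m, hm, hmle⟩ := hr N
    exact ⟨k m, le_trans hm hk.le_apply, htrans _ _ _ hmle (hkle m)⟩
  -- invariant 2 : finite sequences of reps embeddable below the sequence
  set S2 : Ordinal → Set (List ↥reps) :=
    fun α => {l | ∃ k : ℕ → ℕ, StrictMono k ∧
      ∀ i (hi : i < l.length), le (l[i]'hi).1 (f α (k i))} with hS2def
  have hS2mono : ∀ α β : Ordinal, α ≤ β → β < w1 → S2 α ⊆ S2 β := by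
    intro α β hαβ hβ l hl
    obtain ⟨k, hk, hkle⟩ := hchain α β hαβ hβ
    obtain ⟨k', hk', hl'⟩ := hl
    exact ⟨k ∘ k', hk.comp hk', fun i hi => htrans _ _ _ (hl' i hi) (hkle (k' i))⟩
  obtain ⟨α₁, hα₁, hstab1⟩ := stab_lemma S1 hS1mono
  obtain ⟨α₂, hα₂, hstab2⟩ := stab_lemma S2 hS2mono
  refine ⟨max α₁ α₂, max_lt hα₁ hα₂, ?_⟩
  intro α β hα hαβ hβ
  have hαw : α < w1 := lt_of_le_of_lt hαβ hβ
  have hα₁α : α₁ ≤ α := le_trans (le_max_left _ _) hα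
  have hα₂α : α₂ ≤ α := le_trans (le_max_right _ _) hα
  set p : ℕ → P := f β with hpdef
  set q : ℕ → P := f α with hqdef
  -- representatives of the values of p
  have hrp : ∀ n : ℕ, ∃ r : ↥reps, le (p n) r.1 ∧ le r.1 (p n) := by
    intro n
    obtain ⟨r, hrmem, h1, h2⟩ := hquot (p n)
    exact ⟨⟨r, hrmem⟩, h1, h2⟩
  choose rp hrp1 hrp2 using hrp
  -- all but finitely many terms of p are below infinitely many terms of p
  obtain ⟨n₀, hgood⟩ := good_tail le hrefl htrans hwqo p
  -- the head embeds into q, via invariant S2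
  have hhead : ∃ k₁ : ℕ → ℕ, StrictMono k₁ ∧ ∀ i, i < n₀ → le (p i) (q (k₁ i)) := by
    have hlmem : ((List.range n₀).map rp) ∈ S2 β := by
      refine ⟨id, strictMono_id, fun i hi => ?_⟩
      have hi' : i < n₀ := by simpa using hi
      simpa [List.getElem_map, List.getElem_range, hi'] using hrp2 i
    have := hstab2 α β hα₂α hαβ hβ hlmem
    obtain ⟨k₁, hk₁, hk₁le⟩ := this
    refine ⟨k₁, hk₁, fun i hi => ?_⟩
    have hi' : i < ((List.range n₀).map rp).length := by simpa using hi
    have := hk₁le i hi'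
    rw [List.getElem_map, List.getElem_range] at this
    exact htrans _ _ _ (hrp1 i) this
  obtain ⟨k₁, hk₁, hk₁le⟩ := hhead
  -- the tail terms are below infinitely many terms of q, via invariant S1
  have htail : ∀ j (N : ℕ), ∃ m, N ≤ m ∧ le (p (n₀ + j)) (q m) := by
    intro j N
    have hr1 : rp (n₀ + j) ∈ S1 β := by
      intro N'
      obtain ⟨m, hm, hmle⟩ := hgood (n₀ + j) (Nat.le_add_right _ _) N'
      exact ⟨m, hm, htrans _ _ _ (hrp2 (n₀ + j)) hmle⟩
    have hr2 : rp (n₀ + j) ∈ S1 α := hstab1 α β hα₁α hαβ hβ hr1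
    obtain ⟨m, hm, hmle⟩ := hr2 N
    exact ⟨m, hm, htrans _ _ _ (hrp1 (n₀ + j)) hmle⟩
  set base : ℕ := if n₀ = 0 then 0 else k₁ (n₀ - 1) + 1 with hbase
  obtain ⟨t, ht, htbase, htle⟩ := build_seq le p q n₀ base htail
  refine ⟨fun n => if n < n₀ then k₁ n else t (n - n₀), ?_, ?_⟩
  · intro a b hab
    by_cases hb : b < n₀
    · have ha : a < n₀ := lt_trans hab hb
      simpa [ha, hb] using hk₁ hab
    · by_cases ha : a < n₀
      · simp only [ha, if_pos, hb, if_neg, if_false]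
        have h1 : k₁ a ≤ k₁ (n₀ - 1) := hk₁.monotone (by omega)
        have h2 : base ≤ t (b - n₀) := le_trans htbase (ht.monotone (Nat.zero_le _))
        have h3 : k₁ (n₀ - 1) + 1 ≤ base := by
          rw [hbase, if_neg (by omega : ¬ n₀ = 0)]
        omega
      · simp only [ha, hb, if_neg, if_false]
        exact ht (by omega)
  · intro n
    by_cases hn : n < n₀
    · simpa [hn] using hk₁le n hn
    · have h := htle (n - n₀)
      rw [(by omega : n₀ + (n - n₀) = n)] at h
      simpa [hn] using h
end
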